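/- Let Λ ⊆ ℝ^n be compact with every nonempty relatively open subset of Λ of positive Lebesgue measure μ, and let X_1, X_2, … be i.i.d. points of Λ with a Lebesgue-a.e. positive density. Let A_1, …, A_M ⊆ Λ be pairwise disjoint Borel sets covering Λ with μ(A_i) > 0 and μ(∂A_i) = 0 for every i, let p_1, …, p_M ≥ 0 with Σ p_i = 1, and let A ⊆ Λ be Borel with μ(∂A) = 0. For each N let A_N and A_{i,N} denote the Voronoi coverages of A and A_i by the cells generated by X_1, …, X_N, and, whenever μ(A_{i,N}) > 0 for all i, define the counting-measure approximation P̃_N(A) := Σ_{i=1}^M p_i · μ(A_N ∩ A_{i,N})/μ(A_{i,N}). Then almost surely the denominators are eventually positive and P̃_N(A) → P_Λ(A) := Σ_{i=1}^M p_i · μ(A ∩ A_i)/μ(A_i) as N → ∞. -/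

import Mathlib

/-!
Almost surely the samples are dense in `Λ`; by compactness, for large `N` every point of `Λ`
is then within `ε` of one of `X_1, …, X_N`. A point on which the Voronoi coverage `B_N`
and `B` disagree lies in a cell whose center is on the other side, so it is within `ε` of
both `B` and `Λ \ B`: `μ(B_N ∆ B)` is at most the measure of the `ε`-thickened relative
boundary of `B`, which tends to `μ(Λ ∩ ∂B) = 0`. Hence `μ(A_N ∩ A_{i,N}) → μ(A ∩ A_i)` and
`μ(A_{i,N}) → μ(A_i) > 0`. Density is almost sure because every basic open set meeting `Λ`
has positive probability under the sampling law, so by the second Borel–Cantelli lemma it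
contains some sample.
-/

open MeasureTheory ProbabilityTheory Filter
open scoped ENNReal

/-- The Voronoi cell of the sample point `pts j` within `Λ`. -/
def voronoiCell {n N : ℕ} (Λ : Set (Fin n → ℝ)) (pts : Fin N → (Fin n → ℝ))
    (j : Fin N) : Set (Fin n → ℝ) :=
  {x ∈ Λ | ∀ i, dist x (pts j) ≤ dist x (pts i)}

/-- The Voronoi coverage of a set `A`: the union of the Voronoi cells whose centers lie
in `A`. -/
def voronoiCoverage {n N : ℕ} (Λ : Set (Fin n → ℝ)) (pts : Fin N → (Fin n → ℝ))
    (A : Set (Fin n → ℝ)) : Set (Fin n → ℝ) :=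
  ⋃ (j : Fin N) (_ : pts j ∈ A), voronoiCell Λ pts j

open Set Metric
open scoped Topology symmDiff

theorem Set.inter_symmDiff_inter_subset {α : Type*} (S S' T T' : Set α) :
    (S ∩ S') ∆ (T ∩ T') ⊆ S ∆ T ∪ S' ∆ T' := by
  intro x
  simp only [Set.mem_symmDiff, Set.mem_inter_iff, Set.mem_union]
  tauto

theorem iInter_inter_cthickening_inter_cthickening {α : Type*} [PseudoEMetricSpace α]
    (K S T : Set α) :
    ⋂ ε > (0 : ℝ), K ∩ cthickening ε S ∩ cthickening ε T = K ∩ closure S ∩ closure T := by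
  rw [closure_eq_iInter_cthickening S, closure_eq_iInter_cthickening T]
  ext x
  simp only [mem_iInter, mem_inter_iff]
  exact ⟨fun h => ⟨⟨(h 1 one_pos).1.1, fun ε hε => (h ε hε).1.2⟩, fun ε hε => (h ε hε).2⟩,
    fun h ε hε => ⟨⟨h.1.1, h.1.2 ε hε⟩, h.2 ε hε⟩⟩

section SymmDiff

variable {α ι : Type*} [MeasurableSpace α] {μ : Measure α}

theorem tendsto_measure_of_tendsto_measure_symmDiff {l : Filter ι} {S : ι → Set α} {T : Set α}
    (hT : μ T ≠ ∞) (h : Tendsto (fun i => μ (S i ∆ T)) l (𝓝 0)) :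
    Tendsto (fun i => μ (S i)) l (𝓝 (μ T)) := by
  rw [ENNReal.tendsto_nhds hT]
  intro ε hε
  filter_upwards [ENNReal.tendsto_nhds_zero.1 h ε hε] with i hi
  refine ⟨tsub_le_iff_tsub_le.mp ?_, tsub_le_iff_left.mp ?_⟩
  · exact le_measure_symmDiff.trans (symmDiff_comm (S i) T ▸ hi)
  · exact le_measure_symmDiff.trans hi

theorem tendsto_measure_inter_symmDiff_inter {l : Filter ι} {S S' : ι → Set α} {T T' : Set α}
    (h : Tendsto (fun i => μ (S i ∆ T)) l (𝓝 0)) (h' : Tendsto (fun i => μ (S' i ∆ T')) l (𝓝 0)) :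
    Tendsto (fun i => μ ((S i ∩ S' i) ∆ (T ∩ T'))) l (𝓝 0) := by
  refine tendsto_of_tendsto_of_tendsto_of_le_of_le tendsto_const_nhds (by simpa using h.add h')
    (fun _ => zero_le) fun i => ?_
  exact (measure_mono (Set.inter_symmDiff_inter_subset _ _ _ _)).trans (measure_union_le _ _)

end SymmDiff

theorem tendsto_measure_inter_cthickening_inter_cthickening {α : Type*} [PseudoEMetricSpace α]
    [MeasurableSpace α] [OpensMeasurableSpace α] {μ : Measure α} {K S T : Set α}
    (hK : MeasurableSet K) (hKμ : μ K ≠ ∞) :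
    Tendsto (fun ε => μ (K ∩ cthickening ε S ∩ cthickening ε T)) (𝓝[>] 0)
      (𝓝 (μ (K ∩ closure S ∩ closure T))) := by
  rw [← iInter_inter_cthickening_inter_cthickening]
  refine tendsto_measure_biInter_gt (fun ε _ => ?_) (fun ε δ _ hεδ => ?_) ⟨1, one_pos, ?_⟩
  · exact ((hK.inter isClosed_cthickening.measurableSet).inter
      isClosed_cthickening.measurableSet).nullMeasurableSet
  · exact inter_subset_inter (inter_subset_inter_right K (cthickening_mono hεδ S))
      (cthickening_mono hεδ T)
  · exact ne_top_of_le_ne_top hKμ (measure_mono fun x hx => hx.1.1)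

section Voronoi

variable {n N : ℕ} {Λ B : Set (Fin n → ℝ)} {pts : Fin N → Fin n → ℝ} {ε : ℝ}

theorem exists_mem_voronoiCell [Nonempty (Fin N)] {x : Fin n → ℝ} (hx : x ∈ Λ) :
    ∃ j, x ∈ voronoiCell Λ pts j :=
  let ⟨j, hj⟩ := Finite.exists_min fun j => dist x (pts j)
  ⟨j, hx, hj⟩

theorem voronoiCoverage_symmDiff_subset (hpts : ∀ j, pts j ∈ Λ) (hB : B ⊆ Λ)
    (hmesh : ∀ x ∈ Λ, ∃ j, dist x (pts j) ≤ ε) :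
    voronoiCoverage Λ pts B ∆ B ⊆ Λ ∩ cthickening ε B ∩ cthickening ε (Λ \ B) := by
  have hcell : ∀ {x j}, x ∈ voronoiCell Λ pts j → dist x (pts j) ≤ ε := fun {x _} hx =>
    let ⟨i, hi⟩ := hmesh x hx.1
    (hx.2 i).trans hi
  rintro x (⟨hcov, hxB⟩ | ⟨hxB, hcov⟩)
  · obtain ⟨j, hjB, hxj⟩ := mem_iUnion₂.1 hcov
    exact ⟨⟨hxj.1, mem_cthickening_of_dist_le x _ ε B hjB (hcell hxj)⟩,
      self_subset_cthickening _ ⟨hxj.1, hxB⟩⟩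
  · have : Nonempty (Fin N) := let ⟨j, _⟩ := hmesh x (hB hxB); ⟨j⟩
    obtain ⟨j, hxj⟩ := exists_mem_voronoiCell (pts := pts) (hB hxB)
    have hjB : pts j ∉ B := fun hjB => hcov (mem_iUnion₂.2 ⟨j, hjB, hxj⟩)
    exact ⟨⟨hB hxB, self_subset_cthickening _ hxB⟩,
      mem_cthickening_of_dist_le x _ ε _ ⟨hpts j, hjB⟩ (hcell hxj)⟩

end Voronoi

section Convergence

variable {n : ℕ} {μ : Measure (Fin n → ℝ)} {Λ : Set (Fin n → ℝ)} {pts : ℕ → Fin n → ℝ}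

theorem tendsto_measure_voronoiCoverage_symmDiff (hΛ : IsClosed Λ) (hμΛ : μ Λ ≠ ∞)
    (hpts : ∀ j, pts j ∈ Λ)
    (hmesh : ∀ ε > 0, ∀ᶠ N in atTop, ∀ x ∈ Λ, ∃ j : Fin N, dist x (pts j) ≤ ε)
    {B : Set (Fin n → ℝ)} (hB : B ⊆ Λ) (hBbd : μ (Λ ∩ closure B ∩ closure (Λ \ B)) = 0) :
    Tendsto (fun N => μ (voronoiCoverage Λ (fun j : Fin N => pts j) B ∆ B)) atTop (𝓝 0) := by
  refine ENNReal.tendsto_nhds_zero.2 fun δ hδ => ?_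
  have hthick := tendsto_measure_inter_cthickening_inter_cthickening (S := B) (T := Λ \ B)
    hΛ.measurableSet hμΛ
  rw [hBbd] at hthick
  obtain ⟨ε, hεδ, hε⟩ :=
    ((ENNReal.tendsto_nhds_zero.1 hthick δ hδ).and self_mem_nhdsWithin).exists
  filter_upwards [hmesh ε hε] with N hN
  exact (measure_mono (voronoiCoverage_symmDiff_subset (fun j => hpts j) hB hN)).trans hεδ

theorem tendsto_measure_voronoiCoverage_inter (hΛ : IsClosed Λ) (hμΛ : μ Λ ≠ ∞)
    (hpts : ∀ j, pts j ∈ Λ)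
    (hmesh : ∀ ε > 0, ∀ᶠ N in atTop, ∀ x ∈ Λ, ∃ j : Fin N, dist x (pts j) ≤ ε)
    {B C : Set (Fin n → ℝ)} (hB : B ⊆ Λ) (hBbd : μ (Λ ∩ closure B ∩ closure (Λ \ B)) = 0)
    (hC : C ⊆ Λ) (hCbd : μ (Λ ∩ closure C ∩ closure (Λ \ C)) = 0) :
    Tendsto (fun N => μ (voronoiCoverage Λ (fun j : Fin N => pts j) B ∩
      voronoiCoverage Λ (fun j : Fin N => pts j) C)) atTop (𝓝 (μ (B ∩ C))) :=
  tendsto_measure_of_tendsto_measure_symmDiff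
    (ne_top_of_le_ne_top hμΛ (measure_mono (inter_subset_left.trans hB)))
    (tendsto_measure_inter_symmDiff_inter
      (tendsto_measure_voronoiCoverage_symmDiff hΛ hμΛ hpts hmesh hB hBbd)
      (tendsto_measure_voronoiCoverage_symmDiff hΛ hμΛ hpts hmesh hC hCbd))

end Convergence

theorem eventually_forall_exists_dist_le_of_subset_closure_range {α : Type*}
    [PseudoMetricSpace α] {K : Set α} (hK : IsCompact K) {pts : ℕ → α}
    (hdense : K ⊆ closure (range pts))
    {ε : ℝ} (hε : 0 < ε) : ∀ᶠ N in atTop, ∀ x ∈ K, ∃ j : Fin N, dist x (pts j) ≤ ε := by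
  have hcover : K ⊆ ⋃ j, ball (pts j) ε := fun x hx =>
    let ⟨_, ⟨j, rfl⟩, hxj⟩ := mem_closure_iff.1 (hdense hx) ε hε
    mem_iUnion.2 ⟨j, hxj⟩
  obtain ⟨t, ht⟩ := hK.elim_finite_subcover _ (fun _ => isOpen_ball) hcover
  obtain ⟨m, htm⟩ := t.exists_nat_subset_range
  filter_upwards [eventually_ge_atTop m] with N hN x hx
  obtain ⟨j, hjt, hxj⟩ := mem_iUnion₂.1 (ht hx)
  exact ⟨⟨j, (Finset.mem_range.1 (htm hjt)).trans_le hN⟩, (mem_ball.1 hxj).le⟩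

section Sampling

variable {Ω α : Type*} [MeasurableSpace Ω] [MeasurableSpace α] {P : Measure Ω}
  {X : ℕ → Ω → α} {ν : Measure α}

theorem ae_exists_mem_of_iIndepFun (hX : ∀ j, Measurable (X j)) (hindep : iIndepFun X P)
    (hlaw : ∀ j, P.map (X j) = ν) {V : Set α} (hV : MeasurableSet V) (hνV : ν V ≠ 0) :
    ∀ᵐ ω ∂P, ∃ j, X j ω ∈ V := by
  have hprob : ∀ j, P (X j ⁻¹' V) = ν V := fun j => by
    rw [← Measure.map_apply (hX j) hV, hlaw j]
  have hsets : iIndepSet (fun j => X j ⁻¹' V) P :=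
    (iIndepSet_iff_meas_biInter fun j => hX j hV).2 fun s =>
      hindep.measure_inter_preimage_eq_mul s fun _ _ => hV
  have := hsets.isProbabilityMeasure
  have hlimsup := measure_limsup_eq_one (fun j => hX j hV) hsets
    (by simpa [hprob] using ENNReal.tsum_const_eq_top_of_ne_zero (α := ℕ) hνV)
  have hlimsup_m := MeasurableSet.measurableSet_limsup fun j => hX j hV
  filter_upwards [(ae_iff_measure_eq hlimsup_m.nullMeasurableSet).2
    (hlimsup.trans measure_univ.symm)] with ω hω
  exact (mem_limsup_iff_frequently_mem.1 hω).exists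

theorem ae_subset_closure_range_of_iIndepFun [TopologicalSpace α] [SecondCountableTopology α]
    [OpensMeasurableSpace α] (hX : ∀ j, Measurable (X j)) (hindep : iIndepFun X P)
    (hlaw : ∀ j, P.map (X j) = ν) {K : Set α}
    (hK : ∀ U, IsOpen U → (U ∩ K).Nonempty → ν U ≠ 0) :
    ∀ᵐ ω ∂P, K ⊆ closure (range fun j => X j ω) := by
  open TopologicalSpace in
  have hhit : ∀ᵐ ω ∂P, ∀ U ∈ countableBasis α, (U ∩ K).Nonempty → ∃ j, X j ω ∈ U := by
    refine (ae_ball_iff (countable_countableBasis α)).2 fun U hU => ?_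
    by_cases hUK : (U ∩ K).Nonempty
    · have hUo := isOpen_of_mem_countableBasis hU
      filter_upwards [ae_exists_mem_of_iIndepFun hX hindep hlaw hUo.measurableSet
        (hK U hUo hUK)] with ω hω _ using hω
    · exact Eventually.of_forall fun _ h => absurd h hUK
  filter_upwards [hhit] with ω hω x hx
  refine (TopologicalSpace.isBasis_countableBasis α).mem_closure_iff.2 fun U hU hxU => ?_
  obtain ⟨j, hj⟩ := hω U hU ⟨x, hxU, hx⟩
  exact ⟨X j ω, hj, j, rfl⟩

end Sampling

theorem stmt_13_general {n : ℕ} (Λ : Set (Fin n → ℝ)) (hΛ : IsCompact Λ)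
    (hopen : ∀ U : Set (Fin n → ℝ), IsOpen U → (U ∩ Λ).Nonempty → 0 < volume (U ∩ Λ))
    {Ω : Type*} [MeasurableSpace Ω] (P : Measure Ω) [IsProbabilityMeasure P]
    (X : ℕ → Ω → (Fin n → ℝ)) (hX : ∀ j, Measurable (X j))
    (hindep : iIndepFun X P)
    (f : (Fin n → ℝ) → ℝ≥0∞) (hf : Measurable f)
    (hlaw : ∀ j, P.map (X j) = (volume.restrict Λ).withDensity f)
    (hfpos : ∀ᵐ x ∂(volume.restrict Λ), 0 < f x)
    {M : ℕ} (A' : Fin M → Set (Fin n → ℝ))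
    (hA'sub : ∀ i, A' i ⊆ Λ)
    (hA'pos : ∀ i, 0 < volume (A' i))
    (hA'bd : ∀ i, volume (Λ ∩ closure (A' i) ∩ closure (Λ \ A' i)) = 0)
    (p : Fin M → ℝ≥0∞) (hsum : ∑ i, p i = 1)
    (A : Set (Fin n → ℝ)) (hA : A ⊆ Λ)
    (hAbd : volume (Λ ∩ closure A ∩ closure (Λ \ A)) = 0) :
    ∀ᵐ ω ∂P,
      (∀ᶠ N in atTop, ∀ i,
        0 < volume (voronoiCoverage Λ (fun j : Fin N => X j ω) (A' i))) ∧
      Tendsto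
        (fun N => ∑ i, p i *
          (volume (voronoiCoverage Λ (fun j : Fin N => X j ω) A ∩
              voronoiCoverage Λ (fun j : Fin N => X j ω) (A' i)) /
            volume (voronoiCoverage Λ (fun j : Fin N => X j ω) (A' i))))
        atTop (nhds (∑ i, p i * (volume (A ∩ A' i) / volume (A' i)))) := by
  have hΛfin : volume Λ ≠ ∞ := hΛ.measure_lt_top.ne
  have hvol_ac : volume.restrict Λ ≪ (volume.restrict Λ).withDensity f :=
    withDensity_absolutelyContinuous' hf.aemeasurable (hfpos.mono fun _ hx => hx.ne')
  have hmem : ∀ᵐ ω ∂P, ∀ j, X j ω ∈ Λ := ae_all_iff.2 fun j =>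
    ae_of_ae_map (hX j).aemeasurable <| hlaw j ▸
      (withDensity_absolutelyContinuous _ f).ae_le (ae_restrict_mem hΛ.isClosed.measurableSet)
  have hdense : ∀ᵐ ω ∂P, Λ ⊆ closure (range fun j => X j ω) :=
    ae_subset_closure_range_of_iIndepFun hX hindep hlaw fun U hU hUΛ hνU =>
      (hopen U hU hUΛ).ne' (Measure.restrict_apply hU.measurableSet ▸ hvol_ac hνU)
  filter_upwards [hmem, hdense] with ω hmemω hdenseω
  have hmesh := fun ε (hε : 0 < ε) =>
    eventually_forall_exists_dist_le_of_subset_closure_range hΛ hdenseω hε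
  have hcov := fun B C => tendsto_measure_voronoiCoverage_inter (B := B) (C := C) hΛ.isClosed
    hΛfin hmemω hmesh
  have hcov_self : ∀ i, Tendsto
      (fun N => volume (voronoiCoverage Λ (fun j : Fin N => X j ω) (A' i)))
      atTop (𝓝 (volume (A' i))) := fun i => by
    simpa only [inter_self] using hcov _ _ (hA'sub i) (hA'bd i) (hA'sub i) (hA'bd i)
  refine ⟨eventually_all.2 fun i => (hcov_self i).eventually_const_lt (hA'pos i),
    tendsto_finsetSum _ fun i _ => ?_⟩
  have hp : p i ≠ ∞ := ne_top_of_le_ne_top ENNReal.one_ne_top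
    (hsum ▸ Finset.single_le_sum (fun j _ => zero_le) (Finset.mem_univ i))
  exact ENNReal.Tendsto.const_mul
    (ENNReal.Tendsto.div (hcov _ _ hA hAbd (hA'sub i) (hA'bd i)) (Or.inr (hA'pos i).ne')
      (hcov_self i) (Or.inl (measure_ne_top_of_subset (hA'sub i) hΛfin)))
    (Or.inr hp)

/-- Convergence of the counting-measure approximation: for i.i.d. samples from an a.e.
positive density on a compact `Λ ⊆ ℝ^n`, a measurable partition `A_1, …, A_M` of `Λ`
(with positive volumes and relative boundaries of measure zero), weights `p_i` summing
to one, and a Borel `A ⊆ Λ` with relative boundary of measure zero, almost surely the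
Voronoi coverages of the `A_i` eventually have positive volume and
`P̃_N(A) = Σ_i p_i μ(A_N ∩ A_{i,N})/μ(A_{i,N}) → P_Λ(A) = Σ_i p_i μ(A ∩ A_i)/μ(A_i)`. -/
theorem stmt_13 {n : ℕ} (Λ : Set (Fin n → ℝ)) (hΛ : IsCompact Λ)
    (hopen : ∀ U : Set (Fin n → ℝ), IsOpen U → (U ∩ Λ).Nonempty → 0 < volume (U ∩ Λ))
    {Ω : Type*} [MeasurableSpace Ω] (P : Measure Ω) [IsProbabilityMeasure P]
    (X : ℕ → Ω → (Fin n → ℝ)) (hX : ∀ j, Measurable (X j))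
    (hindep : iIndepFun X P)
    (f : (Fin n → ℝ) → ℝ≥0∞) (hf : Measurable f)
    (hlaw : ∀ j, P.map (X j) = (volume.restrict Λ).withDensity f)
    (hfpos : ∀ᵐ x ∂(volume.restrict Λ), 0 < f x)
    {M : ℕ} (A' : Fin M → Set (Fin n → ℝ)) (hA'm : ∀ i, MeasurableSet (A' i))
    (hA'sub : ∀ i, A' i ⊆ Λ) (hdisj : Pairwise (Function.onFun Disjoint A'))
    (hcov : ⋃ i, A' i = Λ)
    (hA'pos : ∀ i, 0 < volume (A' i))
    (hA'bd : ∀ i, volume (Λ ∩ closure (A' i) ∩ closure (Λ \ A' i)) = 0)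
    (p : Fin M → ℝ≥0∞) (hsum : ∑ i, p i = 1)
    (A : Set (Fin n → ℝ)) (hAm : MeasurableSet A) (hA : A ⊆ Λ)
    (hAbd : volume (Λ ∩ closure A ∩ closure (Λ \ A)) = 0) :
    ∀ᵐ ω ∂P,
      (∀ᶠ N in atTop, ∀ i,
        0 < volume (voronoiCoverage Λ (fun j : Fin N => X j ω) (A' i))) ∧
      Tendsto
        (fun N => ∑ i, p i *
          (volume (voronoiCoverage Λ (fun j : Fin N => X j ω) A ∩
              voronoiCoverage Λ (fun j : Fin N => X j ω) (A' i)) /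
            volume (voronoiCoverage Λ (fun j : Fin N => X j ω) (A' i))))
        atTop (nhds (∑ i, p i * (volume (A ∩ A' i) / volume (A' i)))) :=
  stmt_13_general Λ hΛ hopen P X hX hindep f hf hlaw hfpos A' hA'sub hA'pos hA'bd p hsum A hA hAbd
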